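/- arXiv:2302.01971 — 8 statements merged into one kernel-verified Lean document; each statement's English description precedes it below -/
import Mathlib

section
/- Define f(x,y) = ((x+1)·log(x+y)) / ((x+y)·(log(x+y) − log y)) for x > 0 and y ≥ 1 real. Then for each fixed x > 0, f(x,y) is monotonically increasing in y on [1, ∞). -/
/-!
Writing `g y = (x + y) * (log (x + y) - log y)` for the denominator, the function is
`(x + 1) * log (x + y) / g y`, whose numerator is nonnegative and increasing on `[1, ∞)`.
With `v = 1 + x / y` one has `g y = x * (v log v - 1 log 1) / (v - 1)`, a secant slope of the
convex function `t ↦ t log t` from `1`; it increases with `v`, and `v` decreases with `y`,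
so the positive denominator `g` is decreasing.
-/

open Real Set

lemma monotoneOn_mul_log_div_sub_one :
    MonotoneOn (fun v : ℝ => v * log v / (v - 1)) (Ioi 1) := by
  intro p (hp : 1 < p) q (hq : 1 < q) hpq
  simpa using strictConvexOn_mul_log.convexOn.secant_mono (a := 1) (by norm_num)
    (zero_lt_one.trans hp).le (zero_lt_one.trans hq).le hp.ne' hq.ne' hpq

lemma add_mul_log_sub_log_eq {x y : ℝ} (hx : x ≠ 0) (hy : 0 < y) (hxy : 0 < x + y) :
    (x + y) * (log (x + y) - log y) =
      x * ((1 + x / y) * log (1 + x / y) / (1 + x / y - 1)) := by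
  have hv : 1 + x / y = (x + y) / y := by field_simp; ring
  rw [hv, log_div hxy.ne' hy.ne', show (x + y) / y - 1 = x / y by field_simp; ring]
  field_simp

lemma antitoneOn_add_mul_log_sub_log {x : ℝ} (hx : 0 < x) :
    AntitoneOn (fun y => (x + y) * (log (x + y) - log y)) (Ioi 0) := by
  intro a (ha : 0 < a) b (hb : 0 < b) hab
  simp only
  rw [add_mul_log_sub_log_eq hx.ne' ha (by linarith),
    add_mul_log_sub_log_eq hx.ne' hb (by linarith)]
  refine mul_le_mul_of_nonneg_left (monotoneOn_mul_log_div_sub_one ?_ ?_ ?_) hx.le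
  · exact lt_add_of_pos_right 1 (div_pos hx hb)
  · exact lt_add_of_pos_right 1 (div_pos hx ha)
  · gcongr

/-- `f(x,y) = ((x+1)·log(x+y)) / ((x+y)·(log(x+y) − log y))` is, for each fixed `x > 0`,
monotonically increasing in `y` on `[1, ∞)`. -/
theorem stmt1 (x : ℝ) (hx : 0 < x) :
    MonotoneOn (fun y : ℝ =>
      ((x + 1) * Real.log (x + y)) / ((x + y) * (Real.log (x + y) - Real.log y)))
      (Set.Ici 1) := by
  intro a (ha : 1 ≤ a) b (hb : 1 ≤ b) hab
  have hb_pos : 0 < (x + b) * (log (x + b) - log b) :=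
    mul_pos (by linarith) (sub_pos.2 (log_lt_log (by linarith) (by linarith)))
  refine div_le_div₀ ?_ ?_ hb_pos
    (antitoneOn_add_mul_log_sub_log hx (mem_Ioi.2 (by linarith)) (mem_Ioi.2 (by linarith)) hab)
  · exact mul_nonneg (by linarith) (log_nonneg (by linarith))
  · gcongr
end

section
/- Define f(x,K) = ((x+1)·log(x+K)) / ((x+K)·(log(x+K) − log K)) for x ≥ 0 and a positive integer K ≥ 1 (with f interpreted via its limit when needed). Then for each fixed positive integer K, f(x,K) is monotonically decreasing in x on (0, ∞). -/
/-!
Writing `L = log (x + K)`, `c = log K`, the numerator of the derivative of the quotient is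
`(K - 1) L (L - c) - (x + 1) c`. To see that it is nonpositive, put `s = L - c = log (1 + x / K)`,
so that `x + 1 = K (eˢ - 1) + 1`. The Padé bound `2 (K - 1) ≤ (K + 1) c` turns `(K - 1) s²` into
`c (K + 1) s² / 2`, and what is left is `(K - 1) s + (K + 1) s² / 2 ≤ K (eˢ - 1) + 1`, which follows
from `eˢ ≥ 1 + s + s² / 2` and `eˢ ≥ s²`.
-/

open Real Set

lemma two_mul_sub_one_le_add_one_mul_log {t : ℝ} (ht : 1 ≤ t) :
    2 * (t - 1) ≤ (t + 1) * log t := by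
  rcases ht.eq_or_lt with rfl | ht
  · simp
  have ha : 0 < (t - 1)⁻¹ := inv_pos.2 (sub_pos.2 ht)
  -- first term of the series `log (1 + a⁻¹) = ∑ₖ 2 / ((2k + 1) (2a + 1)^(2k + 1))`, `a = (t - 1)⁻¹`
  have hfirst := le_hasSum (hasSum_log_one_add_inv ha) 0 fun _ _ ↦ by positivity
  rw [inv_inv, add_sub_cancel,
    show 2 * (t - 1)⁻¹ + 1 = (t + 1) / (t - 1) by field_simp [(sub_pos.2 ht).ne']; ring] at hfirst
  rw [← div_le_iff₀' (by linarith)]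
  convert hfirst using 1
  norm_num
  ring

lemma sq_le_exp_of_nonneg {s : ℝ} (hs : 0 ≤ s) : s ^ 2 ≤ exp s := by
  have hhalf : s ≤ exp (s / 2) := by
    nlinarith [quadratic_le_exp_of_nonneg (by positivity : 0 ≤ s / 2)]
  calc s ^ 2 ≤ exp (s / 2) ^ 2 := pow_le_pow_left₀ hs hhalf 2
    _ = exp s := by rw [← exp_nat_mul]; ring_nf

lemma sub_one_mul_add_add_one_mul_sq_le {K s : ℝ} (hK : 1 ≤ K) (hs : 0 ≤ s) :
    (K - 1) * s + (K + 1) * s ^ 2 / 2 ≤ K * (exp s - 1) + 1 := by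
  have hquad := quadratic_le_exp_of_nonneg hs
  nlinarith [mul_nonneg (sub_nonneg.2 hK) (sub_nonneg.2 hquad), sq_le_exp_of_nonneg hs]

lemma sub_one_mul_log_mul_sub_log_le {K x : ℝ} (hK : 1 ≤ K) (hx : 0 ≤ x) :
    (K - 1) * log (x + K) * (log (x + K) - log K) ≤ (x + 1) * log K := by
  have hK0 : 0 < K := by linarith
  set c := log K
  set s := log (x + K) - c with hs_def
  have hc : 0 ≤ c := log_nonneg hK
  have hs : 0 ≤ s := sub_nonneg.2 (log_le_log hK0 (by linarith))
  have hexp : x + 1 = K * (exp s - 1) + 1 := by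
    rw [hs_def, exp_sub, exp_log (by linarith), exp_log hK0]
    field_simp
    ring
  have hpade : 2 * (K - 1) ≤ (K + 1) * c := two_mul_sub_one_le_add_one_mul_log hK
  calc (K - 1) * log (x + K) * s = (K - 1) * c * s + (K - 1) * s ^ 2 := by
        rw [hs_def]; ring
    _ ≤ (K - 1) * c * s + (K + 1) * c * s ^ 2 / 2 := by
        nlinarith [mul_le_mul_of_nonneg_right hpade (sq_nonneg s)]
    _ = c * ((K - 1) * s + (K + 1) * s ^ 2 / 2) := by ring
    _ ≤ c * (K * (exp s - 1) + 1) :=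
        mul_le_mul_of_nonneg_left (sub_one_mul_add_add_one_mul_sq_le hK hs) hc
    _ = (x + 1) * c := by rw [hexp]; ring

lemma hasDerivAt_add_one_mul_log_div {K x : ℝ} (hK : 0 < K) (hx : 0 < x) :
    HasDerivAt (fun y : ℝ ↦ ((y + 1) * log (y + K)) / ((y + K) * (log (y + K) - log K)))
      (((K - 1) * log (x + K) * (log (x + K) - log K) - (x + 1) * log K) /
        ((x + K) * (log (x + K) - log K)) ^ 2) x := by
  have hxK : 0 < x + K := by linarith
  have hgap : 0 < log (x + K) - log K := sub_pos.2 (log_lt_log hK (by linarith))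
  have hlog : HasDerivAt (fun y : ℝ ↦ log (y + K)) (x + K)⁻¹ x :=
    ((hasDerivAt_id' x).add_const K).log hxK.ne' |>.congr_deriv (by simp)
  have hnum : HasDerivAt (fun y ↦ (y + 1) * log (y + K))
      (1 * log (x + K) + (x + 1) * (x + K)⁻¹) x :=
    ((hasDerivAt_id' x).add_const 1).mul hlog
  have hden : HasDerivAt (fun y ↦ (y + K) * (log (y + K) - log K))
      (1 * (log (x + K) - log K) + (x + K) * (x + K)⁻¹) x :=
    ((hasDerivAt_id' x).add_const K).mul (hlog.sub_const (log K))
  refine (hnum.div hden (mul_pos hxK hgap).ne').congr_deriv ?_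
  field_simp
  ring

/-- `f(x,K) = ((x+1)·log(x+K)) / ((x+K)·(log(x+K) − log K))` is, for each fixed positive
integer `K`, monotonically decreasing in `x` on `(0, ∞)`. -/
theorem stmt2 (K : ℕ) (hK : 1 ≤ K) :
    AntitoneOn (fun x : ℝ =>
      ((x + 1) * Real.log (x + K)) / ((x + K) * (Real.log (x + K) - Real.log K)))
      (Set.Ioi 0) := by
  have hK' : (1 : ℝ) ≤ K := by exact_mod_cast hK
  have hderiv (x : ℝ) (hx : x ∈ Ioi 0) := hasDerivAt_add_one_mul_log_div (by linarith) hx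
  refine antitoneOn_of_deriv_nonpos (convex_Ioi 0)
    (fun x hx ↦ (hderiv x hx).continuousAt.continuousWithinAt) ?_ ?_ <;> rw [interior_Ioi]
  · exact fun x hx ↦ (hderiv x hx).differentiableAt.differentiableWithinAt
  · intro x hx
    rw [(hderiv x hx).deriv]
    exact div_nonpos_of_nonpos_of_nonneg
      (sub_nonpos.2 (sub_one_mul_log_mul_sub_log_le hK' hx.le)) (sq_nonneg _)
end

section
/- Let c(β,K) = ((b+1)·log(b+K)) / ((b+K)·(log(b+K) − log K)) where b = e^{1/β} − 1, β > 0, and K ≥ 1 is an integer. Then c(β,K) ≥ 1 for all β > 0 and all integers K ≥ 1. -/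
open Real

/-- key inequality: for `2 ≤ K` (natural) and `K ≤ u`, `(K-1) * log u ≤ u * log K`. -/
lemma aux_key (K : ℕ) (hK : 2 ≤ K) (u : ℝ) (hu : (K : ℝ) ≤ u) :
    ((K : ℝ) - 1) * Real.log u ≤ u * Real.log K := by
  have hK2 : (2 : ℝ) ≤ (K : ℝ) := by exact_mod_cast hK
  have hu0 : (0 : ℝ) < u := lt_of_lt_of_le (by linarith) hu
  -- log u ≤ u / e
  have hlog_e : Real.log u ≤ u / Real.exp 1 := by
    have h1 : Real.log (u / Real.exp 1) ≤ u / Real.exp 1 - 1 :=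
      Real.log_le_sub_one_of_pos (by positivity)
    have h2 : Real.log (u / Real.exp 1) = Real.log u - 1 := by
      rw [Real.log_div (ne_of_gt hu0) (ne_of_gt (Real.exp_pos 1)), Real.log_exp]
    linarith
  rcases eq_or_lt_of_le hK with hK2' | hK3
  · -- K = 2
    have hlog2 : (1 : ℝ) / Real.exp 1 ≤ Real.log 2 := by
      have h1 : (2.7182818283 : ℝ) < Real.exp 1 := Real.exp_one_gt_d9
      have h2 : (0.6931471803 : ℝ) < Real.log 2 := Real.log_two_gt_d9
      rw [div_le_iff₀ (Real.exp_pos 1)]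
      nlinarith
    have hKval : (K : ℝ) = 2 := by
      have : K = 2 := by exact_mod_cast hK2'.symm
      simp [this]
    rw [hKval]
    have : Real.log u ≤ u * Real.log 2 := by
      calc Real.log u ≤ u / Real.exp 1 := hlog_e
        _ = u * (1 / Real.exp 1) := by ring
        _ ≤ u * Real.log 2 := by
            apply mul_le_mul_of_nonneg_left hlog2 hu0.le
    linarith
  · -- K ≥ 3
    have hKR3 : (3 : ℝ) ≤ (K : ℝ) := by exact_mod_cast hK3
    have he3 : Real.exp 1 ≤ 3 := by
      have := Real.exp_one_lt_d9; linarith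
    have hmem1 : (K : ℝ) ∈ {x : ℝ | Real.exp 1 ≤ x} := le_trans he3 hKR3
    have hmem2 : u ∈ {x : ℝ | Real.exp 1 ≤ x} := le_trans (le_trans he3 hKR3) hu
    have hmono := Real.log_div_self_antitoneOn hmem1 hmem2 hu
    -- log u / u ≤ log K / K
    have hK0 : (0 : ℝ) < (K : ℝ) := by linarith
    have hlogK0 : 0 ≤ Real.log (K : ℝ) := Real.log_nonneg (by linarith)
    have h1 : Real.log u * (K : ℝ) ≤ Real.log (K : ℝ) * u := by
      have := (div_le_div_iff₀ hu0 hK0).mp hmono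
      linarith
    have hlogu0 : 0 ≤ Real.log u := Real.log_nonneg (by linarith)
    nlinarith

/-- With `b = e^{1/β} − 1`, the smoothness constant
`c(β,K) = ((b+1)·log(b+K)) / ((b+K)·(log(b+K) − log K))` satisfies `c(β,K) ≥ 1`
for all `β > 0` and all integers `K ≥ 1`. -/
theorem stmt5 (β : ℝ) (hβ : 0 < β) (K : ℕ) (hK : 1 ≤ K) :
    1 ≤ ((Real.exp (1 / β) - 1 + 1) * Real.log (Real.exp (1 / β) - 1 + K)) /
      ((Real.exp (1 / β) - 1 + K) *
        (Real.log (Real.exp (1 / β) - 1 + K) - Real.log K)) := by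
  set b : ℝ := Real.exp (1 / β) - 1 with hbdef
  have hb0 : 0 < b := by
    have : 1 < Real.exp (1 / β) := Real.one_lt_exp_iff.mpr (by positivity)
    simp only [hbdef]; linarith
  have hK1 : (1 : ℝ) ≤ (K : ℝ) := by exact_mod_cast hK
  set u : ℝ := b + K with hudef
  have huK : (K : ℝ) < u := by simp only [hudef]; linarith
  have hu1 : 1 < u := lt_of_le_of_lt hK1 huK
  have hK0 : (0 : ℝ) < K := by linarith
  have hu0 : (0 : ℝ) < u := by linarith
  have hlog : Real.log (K : ℝ) < Real.log u := Real.log_lt_log hK0 huK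
  have hD : 0 < u * (Real.log u - Real.log K) :=
    mul_pos hu0 (sub_pos.mpr hlog)
  rw [le_div_iff₀ hD, one_mul]
  -- reduce to (K-1) * log u ≤ u * log K
  have hkey : ((K : ℝ) - 1) * Real.log u ≤ u * Real.log K := by
    rcases eq_or_lt_of_le hK with h1 | h2
    · have : (K : ℝ) = 1 := by exact_mod_cast h1.symm
      simp [this, Real.log_nonneg hu1.le]
    · exact aux_key K h2 u huK.le
  have hbu : b + 1 = u - ((K : ℝ) - 1) := by simp only [hudef]; ring
  calc u * (Real.log u - Real.log K)
      = u * Real.log u - u * Real.log K := by ring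
    _ ≤ u * Real.log u - ((K : ℝ) - 1) * Real.log u := by linarith
    _ = (u - ((K : ℝ) - 1)) * Real.log u := by ring
    _ = (b + 1) * Real.log u := by rw [hbu]
end

section
/- Let c(β,K) = ((b+1)·log(b+K)) / ((b+K)·(log(b+K) − log K)) with b = e^{1/β} − 1. For fixed integer K ≥ 1, c(β,K) is monotonically increasing in β > 0. -/
lemma cubic_le_exp {s : ℝ} (hs : 0 ≤ s) : 1 + s + s^2/2 + s^3/6 ≤ Real.exp s := by
  have h := Real.sum_le_exp_of_nonneg hs 4
  have he : ∑ i ∈ Finset.range 4, s ^ i / (Nat.factorial i : ℝ) = 1 + s + s^2/2 + s^3/6 := by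
    simp [Finset.sum_range_succ, Nat.factorial]
    try ring
  linarith [he ▸ h]

lemma helper_easy (a M s : ℝ) (ha : 0 < a) (hM : 0 < M) (h2a : 2*a ≤ M*(a+1))
    (hs : 0 < s) : a*(s+M)*s < M*((a+1)*Real.exp s - a) := by
  have h2 : 1 + s + s^2/2 ≤ Real.exp s := Real.quadratic_le_exp_of_nonneg hs.le
  have hMK : (0:ℝ) < M*(a+1) := by positivity
  have h3 : M*(a+1)*(1 + s + s^2/2) ≤ M*(a+1)*Real.exp s :=
    mul_le_mul_of_nonneg_left h2 hMK.le
  have h4 : 0 ≤ (M*(a+1)/2 - a) * s^2 :=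
    mul_nonneg (by linarith) (sq_nonneg s)
  nlinarith [mul_pos hM hs]

lemma helper_quad (a M s : ℝ) (ha : 0 < a) (hM : 0 < M)
    (hquad : (a - M*(a+1)/2)^2 ≤ 4*(M*(a+1)/6)*M) (hs : 0 < s) :
    a*(s+M)*s < M*((a+1)*Real.exp s - a) := by
  have hcub : 1 + s + s^2/2 + s^3/6 ≤ Real.exp s := cubic_le_exp hs.le
  have hMK : (0:ℝ) < M*(a+1) := by positivity
  have hcub' : M*(a+1)*(1 + s + s^2/2 + s^3/6) ≤ M*(a+1)*Real.exp s :=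
    mul_le_mul_of_nonneg_left hcub hMK.le
  have hr : (0:ℝ) < M*(a+1)/6 := by positivity
  have quad : 0 ≤ M*(a+1)/6*s^2 - (a - M*(a+1)/2)*s + M := by
    nlinarith [sq_nonneg (2*(M*(a+1)/6)*s - (a - M*(a+1)/2)), hquad, hr,
      mul_pos hr hM]
  nlinarith [mul_nonneg hs.le quad, hcub', hM]

lemma key_ineq (K : ℕ) (hK : 2 ≤ K) (s : ℝ) (hs : 0 < s) :
    ((K:ℝ)-1) * (s + Real.log K) * s < Real.log K * ((K:ℝ) * Real.exp s - ((K:ℝ)-1)) := by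
  have hK1 : (1:ℝ) < K := by exact_mod_cast hK
  have hM : 0 < Real.log K := Real.log_pos hK1
  have hKa : ((K:ℝ)-1) + 1 = K := by ring
  have ha : (0:ℝ) < (K:ℝ)-1 := by linarith
  have hlog2 : (0.6931:ℝ) < Real.log 2 := by linarith [Real.log_two_gt_d9]
  have hlog4 : Real.log 4 = 2 * Real.log 2 := by
    rw [show (4:ℝ) = 2^2 by norm_num, Real.log_pow]; push_cast; ring
  rcases le_or_gt (2*((K:ℝ)-1)) (Real.log K * K) with h | h
  · have := helper_easy ((K:ℝ)-1) (Real.log K) s ha hM (by rw [hKa]; exact h) hs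
    rwa [hKa] at this
  · have hK7 : K ≤ 7 := by
      by_contra h8
      push_neg at h8
      have h8' : (8:ℝ) ≤ K := by exact_mod_cast h8
      have hlog8 : Real.log 8 ≤ Real.log K := Real.log_le_log (by norm_num) h8'
      have he8 : Real.log 8 = 3 * Real.log 2 := by
        rw [show (8:ℝ) = 2^3 by norm_num, Real.log_pow]; push_cast; ring
      have hM2 : (2:ℝ) ≤ Real.log K := by linarith
      nlinarith
    have main : ∀ K' : ℕ, 2 ≤ K' → K' ≤ 7 →
        (((K':ℝ)-1) - Real.log K' * (((K':ℝ)-1)+1)/2)^2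
          ≤ 4*(Real.log K' * (((K':ℝ)-1)+1)/6)*Real.log K' := by
      intro K' h2' h7'
      have hub : ∀ x : ℝ, 0 < x → x < 7.38 → Real.log x < 2 := by
        intro x hx hx7
        rw [Real.log_lt_iff_lt_exp hx, show (2:ℝ) = 1 + 1 by norm_num, Real.exp_add]
        nlinarith [Real.exp_one_gt_d9]
      interval_cases K' <;> push_cast <;> norm_num
      · nlinarith [hlog2]
      · have h3 : (1:ℝ) < Real.log 3 := by
          rw [show (1:ℝ) = Real.log (Real.exp 1) by simp]
          exact Real.log_lt_log (Real.exp_pos 1) (by linarith [Real.exp_one_lt_d9])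
        nlinarith [hub 3 (by norm_num) (by norm_num)]
      · nlinarith [hub 4 (by norm_num) (by norm_num), hlog4 ▸ (by linarith : (1.3862:ℝ) < 2 * Real.log 2)]
      · have h5 : (1.3862:ℝ) < Real.log 5 := by
          have : Real.log 4 ≤ Real.log 5 := Real.log_le_log (by norm_num) (by norm_num)
          rw [hlog4] at this; linarith
        nlinarith [hub 5 (by norm_num) (by norm_num)]
      · have h6 : (1.3862:ℝ) < Real.log 6 := by
          have : Real.log 4 ≤ Real.log 6 := Real.log_le_log (by norm_num) (by norm_num)
          rw [hlog4] at this; linarith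
        nlinarith [hub 6 (by norm_num) (by norm_num)]
      · have h7 : (1.3862:ℝ) < Real.log 7 := by
          have : Real.log 4 ≤ Real.log 7 := Real.log_le_log (by norm_num) (by norm_num)
          rw [hlog4] at this; linarith
        nlinarith [hub 7 (by norm_num) (by norm_num)]
    have := helper_quad ((K:ℝ)-1) (Real.log K) s ha hM (main K hK hK7) hs
    rwa [hKa] at this


noncomputable def gfun (K : ℕ) (u : ℝ) : ℝ :=
  ((u - ((K:ℝ) - 1)) * Real.log u) / (u * (Real.log u - Real.log K))


lemma gfun_hasDeriv (K : ℕ) (hK : 2 ≤ K) {u : ℝ} (hu : (K:ℝ) < u) :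
    HasDerivAt (gfun K)
      (((1 * Real.log u + (u - ((K:ℝ)-1)) * u⁻¹) * (u * (Real.log u - Real.log K)) -
        ((u - ((K:ℝ)-1)) * Real.log u) * (1 * (Real.log u - Real.log K) + u * u⁻¹)) /
        (u * (Real.log u - Real.log K))^2) u := by
  have hK0 : (0:ℝ) < K := by positivity
  have hu0 : (0:ℝ) < u := lt_trans hK0 hu
  have hne : u ≠ 0 := ne_of_gt hu0
  have hL : Real.log K < Real.log u := Real.log_lt_log hK0 hu
  have hD : u * (Real.log u - Real.log K) ≠ 0 :=
    ne_of_gt (mul_pos hu0 (sub_pos.mpr hL))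
  exact HasDerivAt.div
    (((hasDerivAt_id u).sub_const ((K:ℝ)-1)).mul (Real.hasDerivAt_log hne))
    ((hasDerivAt_id u).mul ((Real.hasDerivAt_log hne).sub_const (Real.log K))) hD

lemma gfun_deriv_neg (K : ℕ) (hK : 2 ≤ K) {u : ℝ} (hu : (K:ℝ) < u) :
    deriv (gfun K) u < 0 := by
  rw [(gfun_hasDeriv K hK hu).deriv]
  have hK0 : (0:ℝ) < K := by positivity
  have hu0 : (0:ℝ) < u := lt_trans hK0 hu
  have hne : u ≠ 0 := ne_of_gt hu0
  have hL : Real.log K < Real.log u := Real.log_lt_log hK0 hu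
  have hD : 0 < u * (Real.log u - Real.log K) :=
    mul_pos hu0 (sub_pos.mpr hL)
  apply div_neg_of_neg_of_pos _ (by positivity)
  have hs : 0 < Real.log u - Real.log K := sub_pos.mpr hL
  have hexp : (K:ℝ) * Real.exp (Real.log u - Real.log K) = u := by
    rw [Real.exp_sub, Real.exp_log hu0, Real.exp_log hK0]
    field_simp
  have hkey := key_ineq K hK (Real.log u - Real.log K) hs
  rw [hexp] at hkey
  have hid : (1 * Real.log u + (u - ((K:ℝ)-1)) * u⁻¹) * (u * (Real.log u - Real.log K)) -
      ((u - ((K:ℝ)-1)) * Real.log u) * (1 * (Real.log u - Real.log K) + u * u⁻¹) =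
      ((K:ℝ)-1) * ((Real.log u - Real.log K) + Real.log K) * (Real.log u - Real.log K) -
        Real.log K * (u - ((K:ℝ)-1)) := by
    field_simp
    ring
  rw [hid]
  linarith

lemma gfun_anti (K : ℕ) (hK : 2 ≤ K) : StrictAntiOn (gfun K) (Set.Ioi (K:ℝ)) := by
  apply strictAntiOn_of_deriv_neg (convex_Ioi _)
  · intro x hx
    exact (gfun_hasDeriv K hK hx).continuousAt.continuousWithinAt
  · intro x hx
    rw [interior_Ioi] at hx
    exact gfun_deriv_neg K hK hx

/-- For fixed integer `K ≥ 1`, `c(β,K) = ((b+1)·log(b+K)) / ((b+K)·(log(b+K) − log K))`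
with `b = e^{1/β} − 1` is monotonically increasing in `β` on `(0, ∞)`. -/
theorem stmt6 (K : ℕ) (hK : 1 ≤ K) :
    MonotoneOn (fun β : ℝ =>
      ((Real.exp (1 / β) - 1 + 1) * Real.log (Real.exp (1 / β) - 1 + K)) /
        ((Real.exp (1 / β) - 1 + K) *
          (Real.log (Real.exp (1 / β) - 1 + K) - Real.log K)))
      (Set.Ioi 0) := by
  rcases eq_or_lt_of_le hK with h1 | h2
  · -- K = 1 : the function is constantly 1
    have hconst : ∀ β : ℝ, β ∈ Set.Ioi (0:ℝ) →
        ((Real.exp (1 / β) - 1 + 1) * Real.log (Real.exp (1 / β) - 1 + K)) /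
          ((Real.exp (1 / β) - 1 + K) *
            (Real.log (Real.exp (1 / β) - 1 + K) - Real.log K)) = 1 := by
      intro β hβ
      rw [Set.mem_Ioi] at hβ
      rw [← h1]
      push_cast
      have e1 : Real.exp (1/β) - 1 + 1 = Real.exp (1/β) := by ring
      rw [e1, Real.log_one, sub_zero, Real.log_exp]
      apply div_self
      have h1β : 0 < 1/β := by positivity
      positivity
    intro x hx y hy hxy
    simp only [hconst x hx, hconst y hy]
    exact le_refl _
  · -- 2 ≤ K
    have hK2 : 2 ≤ K := h2
    intro x hx y hy hxy
    rcases eq_or_lt_of_le hxy with rfl | hlt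
    · exact le_refl _
    rw [Set.mem_Ioi] at hx hy
    have hmap : ∀ β : ℝ, 0 < β → (K:ℝ) < Real.exp (1/β) - 1 + K := by
      intro β hβ
      have : (1:ℝ) < Real.exp (1/β) := Real.one_lt_exp_iff.mpr (by positivity)
      linarith
    have heq : ∀ β : ℝ, 0 < β →
        ((Real.exp (1 / β) - 1 + 1) * Real.log (Real.exp (1 / β) - 1 + K)) /
          ((Real.exp (1 / β) - 1 + K) *
            (Real.log (Real.exp (1 / β) - 1 + K) - Real.log K)) =
        gfun K (Real.exp (1/β) - 1 + K) := by
      intro β hβ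
      unfold gfun
      rw [show Real.exp (1/β) - 1 + (K:ℝ) - ((K:ℝ)-1) = Real.exp (1/β) - 1 + 1 by ring]
    have hlt' : Real.exp (1/y) - 1 + (K:ℝ) < Real.exp (1/x) - 1 + K := by
      have : 1/y < 1/x := one_div_lt_one_div_of_lt hx hlt
      have := Real.exp_lt_exp.mpr this
      linarith
    simp only [heq x hx, heq y hy]
    exact le_of_lt (gfun_anti K hK2 (hmap y hy) (hmap x hx) hlt')
end

section
/- Consider a game with n players, pure strategy spaces S_i, utility functions u_i, and welfare W(s) = Σ_i u_i(s). Suppose the game is (λ,μ)-smooth, i.e., for all strategy profiles s, s' ∈ S: Σ_i u_i(s'_i, s_{−i}) ≥ λ·W(s') − μ·W(s). Then for any coarse correlated equilibrium α, E_{s∼α}[W(s)] ≥ (λ/(1+μ))·max_{s'} W(s'). -/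
/-- Smoothness implies a welfare guarantee at any coarse correlated equilibrium:
if the game is `(λ,μ)`-smooth, i.e. `Σᵢ uᵢ(s'ᵢ, s₋ᵢ) ≥ λ·W(s') − μ·W(s)` for all
profiles `s, s'` where `W(s) = Σᵢ uᵢ(s)`, then for any CCE `α` (a distribution over
joint profiles such that no player gains by a unilateral constant deviation),
`E_{s∼α}[W(s)] ≥ (λ/(1+μ))·W(s')` for every profile `s'`. -/
theorem stmt8 {n : ℕ} (S : Fin n → Type*) [∀ i, Fintype (S i)]
    (u : Fin n → (∀ j, S j) → ℝ) (lam mu : ℝ) (hmu : 0 ≤ mu)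
    (hsmooth : ∀ s s' : ∀ j, S j,
      lam * (∑ i, u i s') - mu * (∑ i, u i s) ≤
        ∑ i, u i (Function.update s i (s' i)))
    (α : (∀ j, S j) → ℝ) (hα0 : ∀ s, 0 ≤ α s) (hα1 : ∑ s, α s = 1)
    (hCCE : ∀ (i : Fin n) (si' : S i),
      ∑ s, α s * u i (Function.update s i si') ≤ ∑ s, α s * u i s) :
    ∀ s' : ∀ j, S j,
      lam / (1 + mu) * (∑ i, u i s') ≤ ∑ s, α s * (∑ i, u i s) := by
  intro s'
  set E : ℝ := ∑ s, α s * (∑ i, u i s) with hE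
  set OPT : ℝ := ∑ i, u i s' with hOPT
  have h1 : ∑ s, α s * (lam * OPT - mu * (∑ i, u i s)) ≤
      ∑ s, α s * (∑ i, u i (Function.update s i (s' i))) := by
    apply Finset.sum_le_sum
    intro s _
    exact mul_le_mul_of_nonneg_left (hsmooth s s') (hα0 s)
  have h2 : ∑ s, α s * (∑ i, u i (Function.update s i (s' i))) ≤ E := by
    have : ∑ s, α s * (∑ i, u i (Function.update s i (s' i))) =
        ∑ i, ∑ s, α s * u i (Function.update s i (s' i)) := by
      rw [Finset.sum_comm]
      simp [Finset.mul_sum]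
    rw [this, hE]
    have : (∑ s, α s * ∑ i, u i s) = ∑ i, ∑ s, α s * u i s := by
      rw [Finset.sum_comm]
      simp [Finset.mul_sum]
    rw [this]
    exact Finset.sum_le_sum fun i _ => hCCE i (s' i)
  have h3 : ∑ s, α s * (lam * OPT - mu * (∑ i, u i s)) = lam * OPT - mu * E := by
    simp only [mul_sub, Finset.sum_sub_distrib]
    congr 1
    · rw [← Finset.sum_mul, hα1, one_mul]
    · rw [hE, Finset.mul_sum]
      exact Finset.sum_congr rfl fun s _ => mul_left_comm _ _ _
  have key : lam * OPT ≤ (1 + mu) * E := by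
    have := (h3 ▸ h1).trans h2
    nlinarith
  have hpos : (0:ℝ) < 1 + mu := by linarith
  rw [div_mul_eq_mul_div, div_le_iff₀ hpos]
  linarith [key]
end

section
/- For X ∼ Gumbel(v, 1) (density f(x) = exp(−((x−v)+e^{−(x−v)}))) and independent Y ∼ Gumbel(w, 1), it holds that E[X | X ≥ Y] = γ + log(e^v + e^w), where γ is the Euler–Mascheroni constant. -/
/-!
Write `a = eᵛ`, `b = eʷ`. Then `X` has density `f_a(x) = a e⁻ˣ exp(-a e⁻ˣ)` and `Y` has CDF
`F_b(x) = exp(-b e⁻ˣ)`. Independence and Fubini give `E[g(X); Y ≤ X] = ∫ g f_a F_b`, and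
`f_a F_b = a/(a+b) f_{a+b}`, so `P(Y ≤ X) = a/(a+b)` and `E[X; Y ≤ X] = a/(a+b) E[Gumbel(a+b)]`.
The substitution `t = c e⁻ˣ` turns the mean of `f_c` into `∫₀^∞ (log c - log t) e⁻ᵗ dt`, which is
`log c + γ` because `∫₀^∞ log t e⁻ᵗ dt = Γ'(1) = -γ`.
-/

open MeasureTheory ProbabilityTheory Set Filter Real
open scoped Topology

lemma abs_log_le_two_mul_rpow_add_self {t : ℝ} (ht : 0 < t) :
    |log t| ≤ 2 * t ^ (-(1 / 2) : ℝ) + t := by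
  rcases le_or_gt t 1 with h | h
  · have hlt := abs_log_mul_self_rpow_lt t (1 / 2) ht h (by norm_num)
    rw [abs_mul, abs_of_pos (rpow_pos_of_pos ht _), ← lt_div_iff₀ (rpow_pos_of_pos ht _),
      div_div_eq_mul_div, one_mul, div_eq_mul_inv, ← rpow_neg ht.le] at hlt
    linarith
  · rw [abs_of_nonneg (log_nonneg h.le)]
    have := log_le_sub_one_of_pos ht
    have := rpow_pos_of_pos ht (-(1 / 2) : ℝ)
    linarith

lemma integrableOn_log_mul_exp_neg :
    IntegrableOn (fun t => log t * exp (-t)) (Ioi 0) := by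
  have hdom := ((GammaIntegral_convergent (s := 1 / 2) (by norm_num)).const_mul 2).add
    (GammaIntegral_convergent (s := 2) (by norm_num))
  refine hdom.mono' (by fun_prop) ?_
  filter_upwards [ae_restrict_mem measurableSet_Ioi] with t (ht : 0 < t)
  rw [Pi.add_apply, norm_mul, norm_of_nonneg (exp_pos _).le, Real.norm_eq_abs,
    show (1 / 2 : ℝ) - 1 = -(1 / 2) by norm_num, show (2 : ℝ) - 1 = 1 by norm_num, rpow_one]
  nlinarith [abs_log_le_two_mul_rpow_add_self ht, exp_pos (-t)]

lemma integral_log_mul_exp_neg :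
    ∫ t in Ioi 0, log t * exp (-t) = -eulerMascheroniConstant := by
  have hGammaIntegral := Complex.hasDerivAt_GammaIntegral (s := 1) (by norm_num)
  have hGamma : Complex.Gamma =ᶠ[𝓝 1] Complex.GammaIntegral := by
    filter_upwards [(isOpen_lt continuous_const Complex.continuous_re).mem_nhds
      (show (0 : ℝ) < (1 : ℂ).re by norm_num)] with s hs
    exact Complex.Gamma_eq_integral hs
  have := (hGammaIntegral.congr_of_eventuallyEq hGamma).unique Complex.hasDerivAt_Gamma_one
  simp only [sub_self, Complex.cpow_zero, one_mul, ← Complex.ofReal_mul,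
    integral_complex_ofReal] at this
  exact_mod_cast this

lemma image_univ_const_mul_exp_neg {c : ℝ} (hc : 0 < c) :
    (fun x => c * exp (-x)) '' univ = Ioi 0 := by
  ext t
  simp only [image_univ, mem_range, mem_Ioi]
  refine ⟨fun ⟨x, hx⟩ => hx ▸ by positivity, fun ht => ⟨log c - log t, ?_⟩⟩
  rw [neg_sub, exp_sub, exp_log ht, exp_log hc]
  field_simp

lemma injective_const_mul_exp_neg {c : ℝ} (hc : 0 < c) :
    Function.Injective fun x => c * exp (-x) :=
  fun _ _ h => neg_injective (exp_injective (mul_left_cancel₀ hc.ne' h))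

lemma hasDerivAt_const_mul_exp_neg (c x : ℝ) :
    HasDerivAt (fun x => c * exp (-x)) (-(c * exp (-x))) x := by
  simpa using ((hasDerivAt_neg x).exp).const_mul c

lemma integral_Ioi_eq_integral_const_mul_exp_neg {c : ℝ} (hc : 0 < c) (h : ℝ → ℝ) :
    ∫ t in Ioi 0, h t = ∫ x, c * exp (-x) * h (c * exp (-x)) := by
  rw [← image_univ_const_mul_exp_neg hc, integral_image_eq_integral_abs_deriv_smul
    MeasurableSet.univ (fun x _ => (hasDerivAt_const_mul_exp_neg c x).hasDerivWithinAt)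
    (injective_const_mul_exp_neg hc).injOn, Measure.restrict_univ]
  simp only [abs_neg, smul_eq_mul, abs_of_pos (mul_pos hc (exp_pos _))]

lemma integrableOn_Ioi_iff_integrable_const_mul_exp_neg {c : ℝ} (hc : 0 < c) (h : ℝ → ℝ) :
    IntegrableOn h (Ioi 0) ↔ Integrable fun x => c * exp (-x) * h (c * exp (-x)) := by
  rw [← image_univ_const_mul_exp_neg hc, integrableOn_image_iff_integrableOn_abs_deriv_smul
    MeasurableSet.univ (fun x _ => (hasDerivAt_const_mul_exp_neg c x).hasDerivWithinAt)
    (injective_const_mul_exp_neg hc).injOn, integrableOn_univ]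
  simp only [abs_neg, smul_eq_mul, abs_of_pos (mul_pos hc (exp_pos _))]

-- Parametrized by `a = e^μ` rather than the location `μ`, so that
-- `gumbelCDF a * gumbelCDF b = gumbelCDF (a + b)`.
noncomputable def gumbelCDF (a x : ℝ) : ℝ := exp (-(a * exp (-x)))

noncomputable def gumbelPDF (a x : ℝ) : ℝ := a * exp (-x) * gumbelCDF a x

noncomputable def gumbelMeasure (a : ℝ) : Measure ℝ :=
  volume.withDensity fun x => ENNReal.ofReal (gumbelPDF a x)

lemma gumbelPDF_nonneg {a : ℝ} (ha : 0 ≤ a) (x : ℝ) : 0 ≤ gumbelPDF a x := by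
  unfold gumbelPDF gumbelCDF; positivity

@[fun_prop]
lemma continuous_gumbelPDF (a : ℝ) : Continuous (gumbelPDF a) := by
  unfold gumbelPDF gumbelCDF; fun_prop

lemma gumbelPDF_mul_gumbelCDF {a b : ℝ} (hab : a + b ≠ 0) (x : ℝ) :
    gumbelPDF a x * gumbelCDF b x = a / (a + b) * gumbelPDF (a + b) x := by
  simp only [gumbelPDF, gumbelCDF, add_mul, neg_add, exp_add]
  field_simp

lemma const_mul_exp_neg_mul_eq_mul_gumbelPDF {c : ℝ} (hc : 0 < c) (g : ℝ → ℝ) (x : ℝ) :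
    c * exp (-x) * (g (log c - log (c * exp (-x))) * exp (-(c * exp (-x)))) =
      g x * gumbelPDF c x := by
  rw [log_mul hc.ne' (exp_pos _).ne', log_exp, gumbelPDF, gumbelCDF]
  ring_nf

lemma integral_mul_gumbelPDF {c : ℝ} (hc : 0 < c) (g : ℝ → ℝ) :
    ∫ x, g x * gumbelPDF c x = ∫ t in Ioi 0, g (log c - log t) * exp (-t) := by
  simp only [integral_Ioi_eq_integral_const_mul_exp_neg hc,
    const_mul_exp_neg_mul_eq_mul_gumbelPDF hc]

lemma integrable_mul_gumbelPDF_iff {c : ℝ} (hc : 0 < c) (g : ℝ → ℝ) :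
    Integrable (fun x => g x * gumbelPDF c x) ↔
      IntegrableOn (fun t => g (log c - log t) * exp (-t)) (Ioi 0) := by
  simp only [integrableOn_Ioi_iff_integrable_const_mul_exp_neg hc,
    const_mul_exp_neg_mul_eq_mul_gumbelPDF hc]

lemma integrable_gumbelPDF {c : ℝ} (hc : 0 < c) : Integrable (gumbelPDF c) := by
  have := (integrable_mul_gumbelPDF_iff hc fun _ => 1).mpr
  simp only [one_mul] at this
  exact this (integrableOn_exp_neg_Ioi 0)

lemma integral_gumbelPDF {c : ℝ} (hc : 0 < c) : ∫ x, gumbelPDF c x = 1 := by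
  simpa only [one_mul, integral_exp_neg_Ioi_zero] using integral_mul_gumbelPDF hc fun _ => 1

lemma integrable_id_mul_gumbelPDF {c : ℝ} (hc : 0 < c) :
    Integrable fun x => x * gumbelPDF c x := by
  refine (integrable_mul_gumbelPDF_iff hc fun x => x).mpr ?_
  simp only [sub_mul]
  exact ((integrableOn_exp_neg_Ioi 0).const_mul (log c)).sub integrableOn_log_mul_exp_neg

lemma integral_id_mul_gumbelPDF {c : ℝ} (hc : 0 < c) :
    ∫ x, x * gumbelPDF c x = eulerMascheroniConstant + log c := by
  refine (integral_mul_gumbelPDF hc fun x => x).trans ?_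
  simp only [sub_mul]
  rw [integral_sub ((integrableOn_exp_neg_Ioi 0).const_mul (log c))
    integrableOn_log_mul_exp_neg, integral_const_mul, integral_exp_neg_Ioi_zero,
    integral_log_mul_exp_neg]
  ring

lemma hasDerivAt_gumbelCDF (a x : ℝ) : HasDerivAt (gumbelCDF a) (gumbelPDF a x) x := by
  have := ((hasDerivAt_const_mul_exp_neg a x).neg).exp
  simp only [neg_neg] at this
  rw [gumbelPDF, mul_comm]
  exact this

lemma tendsto_gumbelCDF_atBot {a : ℝ} (ha : 0 < a) : Tendsto (gumbelCDF a) atBot (𝓝 0) :=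
  tendsto_exp_atBot.comp <| tendsto_neg_atTop_atBot.comp <|
    (tendsto_exp_atTop.comp tendsto_neg_atBot_atTop).const_mul_atTop ha

lemma integral_Iic_gumbelPDF {a : ℝ} (ha : 0 < a) (y : ℝ) :
    ∫ x in Iic y, gumbelPDF a x = gumbelCDF a y := by
  simpa using integral_Iic_of_hasDerivAt_of_tendsto' (fun x _ => hasDerivAt_gumbelCDF a x)
    (integrable_gumbelPDF ha).integrableOn (tendsto_gumbelCDF_atBot ha)

lemma gumbelMeasure_Iic {a : ℝ} (ha : 0 < a) (y : ℝ) :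
    gumbelMeasure a (Iic y) = ENNReal.ofReal (gumbelCDF a y) := by
  rw [gumbelMeasure, withDensity_apply _ measurableSet_Iic, ← integral_Iic_gumbelPDF ha,
    ofReal_integral_eq_lintegral_ofReal (integrable_gumbelPDF ha).integrableOn
      (Eventually.of_forall (gumbelPDF_nonneg ha.le))]

lemma gumbelMeasure_real_Iic {a : ℝ} (ha : 0 < a) (y : ℝ) :
    (gumbelMeasure a).real (Iic y) = gumbelCDF a y := by
  rw [measureReal_def, gumbelMeasure_Iic ha,
    ENNReal.toReal_ofReal (by unfold gumbelCDF; positivity)]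

lemma integral_gumbelMeasure {a : ℝ} (ha : 0 ≤ a) (g : ℝ → ℝ) :
    ∫ x, g x ∂gumbelMeasure a = ∫ x, g x * gumbelPDF a x := by
  rw [gumbelMeasure, integral_withDensity_eq_integral_toReal_smul (by fun_prop)
    (Eventually.of_forall fun _ => ENNReal.ofReal_lt_top)]
  simp only [ENNReal.toReal_ofReal (gumbelPDF_nonneg ha _), smul_eq_mul, mul_comm]

lemma integrable_gumbelMeasure_iff {a : ℝ} (ha : 0 ≤ a) (g : ℝ → ℝ) :
    Integrable g (gumbelMeasure a) ↔ Integrable fun x => g x * gumbelPDF a x := by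
  rw [gumbelMeasure, integrable_withDensity_iff_integrable_smul' (by fun_prop)
    (Eventually.of_forall fun _ => ENNReal.ofReal_lt_top)]
  simp only [ENNReal.toReal_ofReal (gumbelPDF_nonneg ha _), smul_eq_mul, mul_comm]

lemma map_eq_gumbelMeasure {Ω : Type*} [MeasurableSpace Ω] {P : Measure Ω} [IsFiniteMeasure P]
    {X : Ω → ℝ} (hX : Measurable X) {m : ℝ}
    (hcdf : ∀ x, (P {ω | X ω ≤ x}).toReal = exp (-exp (-(x - m)))) :
    P.map X = gumbelMeasure (exp m) := by
  refine Measure.ext_of_Iic _ _ fun y => ?_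
  rw [Measure.map_apply hX measurableSet_Iic, gumbelMeasure_Iic (exp_pos m),
    ← ENNReal.ofReal_toReal (measure_ne_top P _)]
  congr 1
  rw [gumbelCDF, ← exp_add, ← sub_eq_add_neg, ← neg_sub]
  exact hcdf y

lemma setIntegral_snd_le_fst_prod {μ ν : Measure ℝ} [SFinite μ] [IsFiniteMeasure ν]
    {g : ℝ → ℝ} (hg : Measurable g) (hint : Integrable (fun x => ν.real (Iic x) * g x) μ) :
    ∫ p in {p : ℝ × ℝ | p.2 ≤ p.1}, g p.1 ∂μ.prod ν = ∫ x, ν.real (Iic x) * g x ∂μ := by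
  set S := {p : ℝ × ℝ | p.2 ≤ p.1}
  have hS : MeasurableSet S := measurableSet_le measurable_snd measurable_fst
  have hsection : ∀ (f : ℝ → ℝ) x,
      (fun y => S.indicator (fun p => f p.1) (x, y)) = (Iic x).indicator fun _ => f x :=
    fun f x => by ext y; simp [S, indicator_apply]
  have hsection_int : ∀ (f : ℝ → ℝ) x,
      ∫ y, S.indicator (fun p => f p.1) (x, y) ∂ν = ν.real (Iic x) * f x := fun f x => by
    rw [hsection, integral_indicator_const _ measurableSet_Iic, smul_eq_mul]
  have hint_prod : Integrable (S.indicator fun p => g p.1) (μ.prod ν) := by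
    refine (integrable_prod_iff ((by fun_prop : Measurable fun p : ℝ × ℝ => g p.1).indicator
      hS).aestronglyMeasurable).mpr ⟨Eventually.of_forall fun x => ?_, ?_⟩
    · rw [hsection]; exact (integrable_const _).indicator measurableSet_Iic
    · refine hint.norm.congr (Eventually.of_forall fun x => ?_)
      simp only [norm_indicator_eq_indicator_norm, hsection_int fun x => ‖g x‖, norm_mul,
        norm_of_nonneg measureReal_nonneg]
  rw [← integral_indicator hS, integral_prod _ hint_prod]
  simp only [hsection_int]

lemma ProbabilityTheory.IndepFun.setIntegral_le_eq_integral_cdf_mul {Ω : Type*}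
    [MeasurableSpace Ω] {P : Measure Ω} [IsFiniteMeasure P] {X Y : Ω → ℝ} (hX : Measurable X)
    (hY : Measurable Y) (hXY : IndepFun X Y P) {g : ℝ → ℝ} (hg : Measurable g)
    (hint : Integrable (fun x => (P.map Y).real (Iic x) * g x) (P.map X)) :
    ∫ ω in {ω | Y ω ≤ X ω}, g (X ω) ∂P = ∫ x, (P.map Y).real (Iic x) * g x ∂P.map X := by
  rw [← setIntegral_snd_le_fst_prod hg hint,
    ← (indepFun_iff_map_prod_eq_prod_map_map hX.aemeasurable hY.aemeasurable).mp hXY,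
    setIntegral_map (measurableSet_le measurable_snd measurable_fst)
      (by fun_prop : Measurable fun p : ℝ × ℝ => g p.1).aestronglyMeasurable
      (hX.prodMk hY).aemeasurable]
  rfl

lemma setIntegral_le_of_map_eq_gumbelMeasure {Ω : Type*} [MeasurableSpace Ω]
    {P : Measure Ω} [IsFiniteMeasure P] {X Y : Ω → ℝ} (hX : Measurable X) (hY : Measurable Y)
    (hXY : IndepFun X Y P) {a b : ℝ} (ha : 0 < a) (hb : 0 < b)
    (hXlaw : P.map X = gumbelMeasure a) (hYlaw : P.map Y = gumbelMeasure b)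
    (g : ℝ → ℝ) (hg : Measurable g) (hint : Integrable fun x => g x * gumbelPDF (a + b) x) :
    ∫ ω in {ω | Y ω ≤ X ω}, g (X ω) ∂P = a / (a + b) * ∫ x, g x * gumbelPDF (a + b) x := by
  have hab : a + b ≠ 0 := (add_pos ha hb).ne'
  have hdensity : ∀ x,
      gumbelCDF b x * g x * gumbelPDF a x = a / (a + b) * (g x * gumbelPDF (a + b) x) :=
    fun x => by linear_combination g x * gumbelPDF_mul_gumbelCDF hab x
  rw [hXY.setIntegral_le_eq_integral_cdf_mul hX hY hg, hXlaw, hYlaw]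
  · simp only [gumbelMeasure_real_Iic hb, integral_gumbelMeasure ha.le, hdensity,
      integral_const_mul]
  · simp only [hXlaw, hYlaw, gumbelMeasure_real_Iic hb, integrable_gumbelMeasure_iff ha.le,
      hdensity]
    exact hint.const_mul _

/-- For independent `X ∼ Gumbel(v,1)` and `Y ∼ Gumbel(w,1)` (CDF `e^{−e^{−(x−μ)}}`),
`E[X | X ≥ Y] = γ + log(e^v + e^w)`. -/
theorem stmt13 {Ω : Type*} [MeasureSpace Ω] [IsProbabilityMeasure (ℙ : Measure Ω)]
    (X Y : Ω → ℝ) (hX : Measurable X) (hY : Measurable Y)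
    (hindep : IndepFun X Y ℙ) (v w : ℝ)
    (hXcdf : ∀ x : ℝ, (ℙ {ω | X ω ≤ x}).toReal = Real.exp (-Real.exp (-(x - v))))
    (hYcdf : ∀ x : ℝ, (ℙ {ω | Y ω ≤ x}).toReal = Real.exp (-Real.exp (-(x - w)))) :
    (∫ ω in {ω | Y ω ≤ X ω}, X ω ∂ℙ) / (ℙ {ω | Y ω ≤ X ω}).toReal =
      Real.eulerMascheroniConstant + Real.log (Real.exp v + Real.exp w) := by
  have hab : 0 < exp v + exp w := by positivity
  have hrace := setIntegral_le_of_map_eq_gumbelMeasure hX hY hindep (exp_pos v) (exp_pos w)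
    (map_eq_gumbelMeasure hX hXcdf) (map_eq_gumbelMeasure hY hYcdf)
  have hnum := hrace (fun x => x) measurable_id (integrable_id_mul_gumbelPDF hab)
  have hden := hrace (fun _ => 1) measurable_const (by simpa using integrable_gumbelPDF hab)
  beta_reduce at hnum hden
  rw [integral_id_mul_gumbelPDF hab] at hnum
  simp only [one_mul, integral_gumbelPDF hab, setIntegral_const, smul_eq_mul, mul_one,
    measureReal_def] at hden
  rw [hnum, hden]
  field_simp
end

section
/- For each user j with user-utility π_j(S) = log(Σ_{s ∈ T_j(S;K)} e^{σ(s,x_j)}), the function π_j is submodular as a set function: for any finite set S and strategies s_x, s_y, π_j(S ∪ {s_x}) − π_j(S) ≥ π_j(S ∪ {s_x, s_y}) − π_j(S ∪ {s_y}). -/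
open Finset

/-- The sum of exponentiated scores of the top-`K` recommendation list `T(S;K)`:
the `K` elements of `S` with largest scores `f`, padded with default elements of
score `0` (hence exponentiated score `1`) when `|S| < K`. Since all scores are
nonnegative, this equals the maximum over subsets `T ⊆ S` with `|T| ≤ K` of
`Σ_{s∈T} e^{f s} + (K − |T|)`. -/
noncomputable def topKExpSum {α : Type*} (K : ℕ) (f : α → ℝ) (S : Finset α) : ℝ :=
  (S.powerset.filter (fun T => T.card ≤ K)).sup'
    ⟨∅, by simp⟩
    (fun T => (∑ s ∈ T, Real.exp (f s)) + ((K - T.card : ℕ) : ℝ))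

section Aux

variable {α : Type*} [DecidableEq α] (f : α → ℝ) (K : ℕ) (S : Finset α)

/-- Any feasible subset gives a lower bound on `topKExpSum`. -/
lemma topK_le_of_mem {T : Finset α} (hTS : T ⊆ S) (hTK : T.card ≤ K) :
    (∑ s ∈ T, Real.exp (f s)) + ((K - T.card : ℕ) : ℝ) ≤ topKExpSum K f S :=
  Finset.le_sup' (fun T => (∑ s ∈ T, Real.exp (f s)) + ((K - T.card : ℕ) : ℝ))
    (Finset.mem_filter.mpr ⟨Finset.mem_powerset.mpr hTS, hTK⟩)

lemma topK_ge : (K : ℝ) ≤ topKExpSum K f S := by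
  have h2 := topK_le_of_mem f K S (Finset.empty_subset S) (by simp)
  simpa using h2

lemma topK_mono {S' : Finset α} (h : S ⊆ S') : topKExpSum K f S ≤ topKExpSum K f S' := by
  apply Finset.sup'_le
  intro T hT
  simp only [mem_filter, mem_powerset] at hT
  exact topK_le_of_mem f K S' (hT.1.trans h) hT.2

lemma topK_zero : topKExpSum 0 f S = 0 := by
  apply le_antisymm
  · apply Finset.sup'_le
    intro T hT
    simp only [mem_filter, mem_powerset, Nat.le_zero, Finset.card_eq_zero] at hT
    simp [hT.2]
  · simpa using topK_ge f 0 S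

lemma topK_exists : ∃ T ⊆ S, T.card ≤ K ∧
    topKExpSum K f S = (∑ s ∈ T, Real.exp (f s)) + ((K - T.card : ℕ) : ℝ) := by
  obtain ⟨T, hT, hval⟩ := Finset.exists_mem_eq_sup'
    (⟨∅, by simp⟩ : (S.powerset.filter (fun T => T.card ≤ K)).Nonempty)
    (fun T => (∑ s ∈ T, Real.exp (f s)) + ((K - T.card : ℕ) : ℝ))
  simp only [mem_filter, mem_powerset] at hT
  exact ⟨T, hT.1, hT.2, hval⟩

/-- Recursion: adding a new element `x` either leaves the top list unchanged or
puts `x` into it, on top of the best `K`-element list. -/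
lemma topK_insert {x : α} (hx : x ∉ S) :
    topKExpSum (K+1) f (insert x S) =
      max (topKExpSum (K+1) f S) (Real.exp (f x) + topKExpSum K f S) := by
  apply le_antisymm
  · apply Finset.sup'_le
    intro T hT
    simp only [mem_filter, mem_powerset] at hT
    by_cases hxT : x ∈ T
    · refine le_max_of_le_right ?_
      have hTe : T.erase x ⊆ S := by
        intro a ha
        rcases Finset.mem_insert.mp (hT.1 (Finset.mem_of_mem_erase ha)) with h | h
        · exact absurd h (Finset.ne_of_mem_erase ha)
        · exact h
      have hcard : (T.erase x).card + 1 = T.card := Finset.card_erase_add_one hxT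
      have hcardle : (T.erase x).card ≤ K := by omega
      have hsum : ∑ s ∈ T, Real.exp (f s)
          = Real.exp (f x) + ∑ s ∈ T.erase x, Real.exp (f s) :=
        (Finset.add_sum_erase _ _ hxT).symm
      have hle := topK_le_of_mem f K S hTe hcardle
      have hcast : ((K+1 - T.card : ℕ) : ℝ) = ((K - (T.erase x).card : ℕ) : ℝ) := by
        congr 1; omega
      rw [hsum, hcast]
      linarith [hle]
    · refine le_max_of_le_left ?_
      have hTS : T ⊆ S := fun a ha =>
        (Finset.mem_insert.mp (hT.1 ha)).resolve_left (by rintro rfl; exact hxT ha)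
      exact topK_le_of_mem f (K+1) S hTS hT.2
  · apply max_le
    · exact topK_mono f (K+1) S (Finset.subset_insert x S)
    · obtain ⟨T, hTS, hTK, hv⟩ := topK_exists f K S
      have hxT : x ∉ T := fun h => hx (hTS h)
      have hle := topK_le_of_mem f (K+1) (insert x S)
        (Finset.insert_subset_insert x hTS)
        (by rw [Finset.card_insert_of_notMem hxT]; omega)
      rw [Finset.sum_insert hxT, Finset.card_insert_of_notMem hxT] at hle
      have hcast : ((K+1 - (T.card+1) : ℕ) : ℝ) = ((K - T.card : ℕ) : ℝ) := by
        congr 1; omega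
      rw [hcast] at hle
      rw [hv]
      linarith [hle]

/-- Concavity of `topKExpSum` in `K`. -/
lemma topK_concave :
    topKExpSum (K+2) f S + topKExpSum K f S ≤ 2 * topKExpSum (K+1) f S := by
  obtain ⟨T, hTS, hTK, hTv⟩ := topK_exists f (K+2) S
  obtain ⟨U, hUS, hUK, hUv⟩ := topK_exists f K S
  by_cases hcard : T.card ≤ K+1
  · have h1 := topK_le_of_mem f (K+1) S hTS hcard
    have h2 := topK_le_of_mem f (K+1) S hUS (by omega)
    have hc1 : ((K+2 - T.card : ℕ) : ℝ) = ((K+1 - T.card : ℕ) : ℝ) + 1 := by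
      have h : (K+2 - T.card : ℕ) = (K+1 - T.card : ℕ) + 1 := by omega
      rw [h]; push_cast; ring
    have hc2 : ((K - U.card : ℕ) : ℝ) + 1 = ((K+1 - U.card : ℕ) : ℝ) := by
      have h : (K+1 - U.card : ℕ) = (K - U.card : ℕ) + 1 := by omega
      rw [h]; push_cast; ring
    rw [hTv, hUv, hc1]
    linarith [h1, h2]
  · have hTcard : T.card = K+2 := by omega
    have hUT : ¬ T ⊆ U := fun h => by have := Finset.card_le_card h; omega
    obtain ⟨t, htT, htU⟩ := Finset.not_subset.mp hUT
    have htS : t ∈ S := hTS htT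
    have hTe : T.erase t ⊆ S := (Finset.erase_subset t T).trans hTS
    have hTecard : (T.erase t).card = K+1 := by
      rw [Finset.card_erase_of_mem htT]; omega
    have h1 := topK_le_of_mem f (K+1) S hTe (le_of_eq hTecard)
    have h2 := topK_le_of_mem f (K+1) S (Finset.insert_subset htS hUS)
      (by rw [Finset.card_insert_of_notMem htU]; omega)
    rw [Finset.sum_erase_eq_sub htT, hTecard] at h1
    rw [Finset.sum_insert htU, Finset.card_insert_of_notMem htU] at h2
    have hc1 : ((K+1 - (K+1) : ℕ) : ℝ) = 0 := by norm_num
    have hc2 : ((K+2 - T.card : ℕ) : ℝ) = 0 := by rw [hTcard]; norm_num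
    have hc3 : ((K+1 - (U.card+1) : ℕ) : ℝ) = ((K - U.card : ℕ) : ℝ) := by
      congr 1; omega
    rw [hc1] at h1
    rw [hc3] at h2
    rw [hTv, hUv, hc2]
    linarith [h1, h2]

end Aux

/-- The key elementary inequality behind submodularity of the log-utility. -/
lemma topK_arith {a b c X Y : ℝ} (ha : 0 ≤ a) (hc : 0 ≤ c) (hX : 0 ≤ X) (hY : 0 ≤ Y)
    (habc : a + c ≤ 2 * b) :
    max (max a (Y + b)) (X + max b (Y + c)) * a ≤ max a (X + b) * max a (Y + b) := by
  have hb : 0 ≤ b := by linarith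
  have hM1a : a ≤ max a (X + b) := le_max_left _ _
  have hM2a : a ≤ max a (Y + b) := le_max_left _ _
  have hM1 : 0 ≤ max a (X + b) := le_trans ha hM1a
  have hM2 : 0 ≤ max a (Y + b) := le_trans ha hM2a
  have hsplit : X + max b (Y + c) = max (X + b) (X + (Y + c)) :=
    (max_add_add_left X b (Y+c)).symm
  rw [hsplit, max_mul_of_nonneg _ _ ha, max_mul_of_nonneg _ _ ha, max_mul_of_nonneg _ _ ha]
  refine max_le (max_le ?_ ?_) (max_le ?_ ?_)
  · exact mul_le_mul hM1a hM2a ha hM1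
  · calc (Y + b) * a ≤ max a (Y + b) * max a (X + b) :=
          mul_le_mul (le_max_right _ _) hM1a ha hM2
      _ = _ := mul_comm _ _
  · exact mul_le_mul (le_max_right _ _) hM2a ha hM1
  · rcases le_or_gt (X + b) a with h1 | h1
    · have hXY : X + (Y + c) ≤ Y + b := by linarith
      calc (X + (Y + c)) * a ≤ max a (Y + b) * max a (X + b) :=
            mul_le_mul (hXY.trans (le_max_right _ _)) hM1a ha hM2
        _ = _ := mul_comm _ _
    · rcases le_or_gt (Y + b) a with h2 | h2
      · have hXY : X + (Y + c) ≤ X + b := by linarith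
        exact mul_le_mul (hXY.trans (le_max_right _ _)) hM2a ha hM1
      · rw [max_eq_right h1.le, max_eq_right h2.le]
        nlinarith [mul_nonneg (by linarith : (0:ℝ) ≤ X + b - a) (by linarith : (0:ℝ) ≤ Y + b - a),
          mul_nonneg ha (by linarith : (0:ℝ) ≤ 2 * b - a - c)]

lemma topK_log_lemma {p q r s : ℝ} (hp : 0 < p) (hq : 0 < q) (hr : 0 < r) (hs : 0 < s)
    (h : p * r ≤ q * s) : Real.log p - Real.log s ≤ Real.log q - Real.log r := by
  have h1 : Real.log (p * r) ≤ Real.log (q * s) := Real.log_le_log (by positivity) h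
  rw [Real.log_mul hp.ne' hr.ne', Real.log_mul hq.ne' hs.ne'] at h1
  linarith

/-- Submodularity of each user's utility `π(S) = log (Σ_{s ∈ T(S;K)} e^{σ(s,x)})`
(Lemma 2): for any finite set `S` and strategies `s_x, s_y`,
`π(S ∪ {s_x}) − π(S) ≥ π(S ∪ {s_x, s_y}) − π(S ∪ {s_y})`. -/
theorem stmt15 {α : Type*} [DecidableEq α] (f : α → ℝ) (hf : ∀ a, 0 ≤ f a)
    (K : ℕ) (hK : 1 ≤ K) (S : Finset α) (sx sy : α) :
    Real.log (topKExpSum K f (insert sx (insert sy S))) -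
        Real.log (topKExpSum K f (insert sy S)) ≤
      Real.log (topKExpSum K f (insert sx S)) - Real.log (topKExpSum K f S) := by
  have hKpos : (0:ℝ) < K := by exact_mod_cast hK
  have hpos : ∀ (S' : Finset α), 0 < topKExpSum K f S' := fun S' =>
    lt_of_lt_of_le hKpos (topK_ge f K S')
  by_cases hxS : sx ∈ S
  · rw [Finset.insert_eq_self.mpr (Finset.mem_insert_of_mem hxS),
      Finset.insert_eq_self.mpr hxS]
    simp
  by_cases hyS : sy ∈ S
  · rw [Finset.insert_eq_self.mpr hyS]
  by_cases hxy : sx = sy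
  · subst hxy
    rw [Finset.insert_idem]
    simp only [sub_self]
    have hmono := topK_mono f K S (Finset.subset_insert sx S)
    have hlog := Real.log_le_log (hpos S) hmono
    linarith
  -- main case: sx ∉ S, sy ∉ S, sx ≠ sy
  obtain ⟨k, rfl⟩ : ∃ k, K = k + 1 := ⟨K - 1, by omega⟩
  have hsxy : sx ∉ insert sy S := by
    simp only [Finset.mem_insert]
    push_neg
    exact ⟨hxy, hxS⟩
  have hX : (0:ℝ) ≤ Real.exp (f sx) := (Real.exp_pos _).le
  have hY : (0:ℝ) ≤ Real.exp (f sy) := (Real.exp_pos _).le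
  apply topK_log_lemma (hpos _) (hpos _) (hpos _) (hpos _)
  rw [topK_insert f k (insert sy S) hsxy, topK_insert f k S hxS, topK_insert f k S hyS]
  cases k with
  | zero =>
      rw [topK_zero f (insert sy S), topK_zero f S]
      simp only [add_zero]
      have ha : 0 ≤ topKExpSum (0+1) f S := (hpos S).le
      set a := topKExpSum (0+1) f S with hadef
      set X := Real.exp (f sx)
      set Y := Real.exp (f sy)
      rw [max_mul_of_nonneg _ _ ha]
      have hMX : 0 ≤ max a X := le_trans ha (le_max_left _ _)
      have hMY : 0 ≤ max a Y := le_trans ha (le_max_left _ _)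
      refine max_le ?_ ?_
      · rw [max_mul_of_nonneg _ _ ha]
        refine max_le ?_ ?_
        · exact mul_le_mul (le_max_left _ _) (le_max_left _ _) ha hMX
        · calc Y * a ≤ max a Y * max a X :=
              mul_le_mul (le_max_right _ _) (le_max_left _ _) ha hMY
            _ = _ := mul_comm _ _
      · exact mul_le_mul (le_max_right _ _) (le_max_left _ _) ha hMX
  | succ m =>
      rw [topK_insert f m S hyS]
      have hc : (0:ℝ) ≤ topKExpSum m f S := le_trans (Nat.cast_nonneg m) (topK_ge f m S)
      have hcc : topKExpSum (m+2) f S + topKExpSum m f S ≤ 2 * topKExpSum (m+1) f S :=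
        topK_concave f m S
      exact topK_arith (hpos S).le hc hX hY hcc
end

section
/- Fix β ∈ (0,1], an integer n > 2, and an integer K with 1 ≤ K ≤ min{n−1, e^{1/(5β)}}. Set b = e^{1/β} − 1 and a = β·log K + 1. Then a ≤ (β·log K + 1) / (β·((b+1)/(b+K)·log(b+K) − (1/n)·log K)). -/
/-- For `β ∈ (0,1]`, integers `n > 2` and `1 ≤ K ≤ min{n−1, e^{1/(5β)}}`, with
`b = e^{1/β} − 1` and `a = β·log K + 1`, one has
`a ≤ (β·log K + 1) / (β·((b+1)/(b+K)·log(b+K) − (1/n)·log K))`. -/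
theorem stmt16 (β : ℝ) (hβ0 : 0 < β) (hβ1 : β ≤ 1) (n : ℕ) (hn : 2 < n)
    (K : ℕ) (hK1 : 1 ≤ K) (hKn : K ≤ n - 1) (hKβ : (K : ℝ) ≤ Real.exp (1 / (5 * β))) :
    β * Real.log K + 1 ≤
      (β * Real.log K + 1) /
        (β * ((Real.exp (1 / β) - 1 + 1) / (Real.exp (1 / β) - 1 + K) *
            Real.log (Real.exp (1 / β) - 1 + K) - (1 / n) * Real.log K)) := by
  have hE1 : Real.exp (1/β) - 1 + 1 = Real.exp (1/β) := by ring
  rw [hE1]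
  set E := Real.exp (1/β) with hEdef
  have hK1' : (1:ℝ) ≤ K := by exact_mod_cast hK1
  have hEe : Real.exp 1 ≤ E := Real.exp_le_exp.mpr (by rw [le_div_iff₀ hβ0]; linarith)
  have he1 : (1:ℝ) < Real.exp 1 := by nlinarith [Real.exp_one_gt_d9]
  have hE0 : (0:ℝ) < E := Real.exp_pos _
  have hKE : (K:ℝ) ≤ E := le_trans hKβ (Real.exp_le_exp.mpr (by
    rw [div_le_div_iff₀ (by positivity) hβ0]; nlinarith))
  have hlogK0 : 0 ≤ Real.log K := Real.log_nonneg hK1'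
  have hlogE : Real.log E = 1/β := Real.log_exp _
  have hbK : Real.exp 1 ≤ E - 1 + K := by linarith
  have hbK0 : (0:ℝ) < E - 1 + K := lt_of_lt_of_le (by linarith) hbK
  have hEle : E ≤ E - 1 + K := by linarith
  -- antitone step
  have hanti := Real.log_div_self_antitoneOn hEe hbK hEle
  simp only at hanti
  have hupper : E / (E - 1 + K) * Real.log (E - 1 + K) ≤ 1/β := by
    have := mul_le_mul_of_nonneg_left hanti (le_of_lt hE0)
    calc E / (E - 1 + K) * Real.log (E - 1 + K)
        = E * (Real.log (E - 1 + K) / (E - 1 + K)) := by ring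
      _ ≤ E * (Real.log E / E) := this
      _ = Real.log E := by field_simp
      _ = 1/β := hlogE
  have hn3 : (3:ℝ) ≤ n := by exact_mod_cast hn
  have hn0 : (0:ℝ) < n := by linarith
  have hlogKle : Real.log K ≤ 1/(5*β) := by
    have := Real.log_le_log (by linarith) hKβ
    rwa [Real.log_exp] at this
  have hsecond : (1/(n:ℝ)) * Real.log K ≤ (1/3) * (1/(5*β)) := by
    apply mul_le_mul _ hlogKle hlogK0 (by norm_num)
    rw [div_le_div_iff₀ hn0 (by norm_num)]; linarith
  have hlow : 1/(2*β) ≤ E / (E - 1 + K) * Real.log (E - 1 + K) := by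
    have h1 : (1:ℝ)/2 ≤ E / (E - 1 + K) := by
      rw [div_le_div_iff₀ (by norm_num) hbK0]; linarith
    have h2 : 1/β ≤ Real.log (E - 1 + K) := by
      rw [← hlogE]; exact Real.log_le_log hE0 hEle
    calc 1/(2*β) = (1/2) * (1/β) := by ring
      _ ≤ E / (E - 1 + K) * Real.log (E - 1 + K) :=
        mul_le_mul h1 h2 (by positivity) (by positivity)
  set D := E / (E - 1 + K) * Real.log (E - 1 + K) - (1/(n:ℝ)) * Real.log K with hD
  have hD0 : 0 < D := by
    have : (1:ℝ)/3 * (1/(5*β)) < 1/(2*β) := by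
      rw [show (1:ℝ)/3 * (1/(5*β)) = 1/(15*β) from by ring,
        div_lt_div_iff₀ (by positivity) (by positivity)]
      nlinarith
    have := hsecond; rw [hD]; linarith
  have hβD0 : 0 < β * D := by positivity
  have hβD1 : β * D ≤ 1 := by
    have : β * D ≤ β * (1/β) := by
      apply mul_le_mul_of_nonneg_left _ (le_of_lt hβ0)
      have hp : 0 ≤ 1/(n:ℝ) * Real.log K := by positivity
      rw [hD]; linarith
    rw [mul_one_div, div_self (ne_of_gt hβ0)] at this
    exact this
  have ha : 0 ≤ β * Real.log K + 1 := by nlinarith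
  rw [le_div_iff₀ hβD0]
  exact mul_le_of_le_one_right ha hβD1
end
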